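/- arXiv:2102.03421 — 3 statements merged into one kernel-verified Lean document; each statement's English description precedes it below -/
import Mathlib

section
/- Let $\mathcal{O}$ be a Dedekind domain, $p$ a nonzero element with $p\mathcal{O}$ squarefree, $\mathfrak{p}$ a prime ideal containing $p$, and set $R = \mathcal{O}/p\mathcal{O}$. If $M$ is an $R$-module (equivalently, a $p$-torsion $\mathcal{O}$-module), then $M \otimes_R (\mathcal{O}/\mathfrak{p}) \cong M[\mathfrak{p}]$, where $M[\mathfrak{p}]$ denotes the submodule of elements annihilated by $\mathfrak{p}$. -/
open TensorProduct

/-- Let `𝒪` be a Dedekind domain, `p ≠ 0` with `p𝒪` squarefree, `𝔭` a prime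
ideal containing `p`.  If `M` is an `𝒪/p𝒪`-module, i.e. a `p`-torsion `𝒪`-module, then
`M ⊗ (𝒪/𝔭) ≅ M[𝔭]`, the submodule of elements annihilated by `𝔭`. -/
theorem stmt_2 (𝒪 : Type*) [CommRing 𝒪] [IsDomain 𝒪] [IsDedekindDomain 𝒪]
    (p : 𝒪) (hp : p ≠ 0) (hsqfree : Squarefree (Ideal.span {p} : Ideal 𝒪))
    (𝔭 : Ideal 𝒪) (hprime : 𝔭.IsPrime) (hp𝔭 : p ∈ 𝔭)
    (M : Type*) [AddCommGroup M] [Module 𝒪 M] (htors : ∀ m : M, p • m = 0) :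
    Nonempty (((𝒪 ⧸ 𝔭) ⊗[𝒪] M) ≃ₗ[𝒪] Submodule.torsionBySet 𝒪 M (𝔭 : Set 𝒪)) := by
  -- p𝒪 = 𝔭 * J
  have hle : Ideal.span {p} ≤ 𝔭 := (Ideal.span_singleton_le_iff_mem 𝔭).2 hp𝔭
  obtain ⟨J, hJ⟩ : 𝔭 ∣ Ideal.span {p} := Ideal.dvd_iff_le.2 hle
  -- every element of p𝒪 kills M
  have hspan : ∀ y ∈ Ideal.span {p}, ∀ m : M, y • m = 0 := by
    intro y hy m
    obtain ⟨c, rfl⟩ := Ideal.mem_span_singleton.1 hy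
    rw [mul_comm, mul_smul, htors, smul_zero]
  -- 𝔭 does not divide J
  have hnd : ¬ 𝔭 ∣ J := by
    intro ⟨K, hK⟩
    have : 𝔭 * 𝔭 ∣ Ideal.span {p} := ⟨K, by rw [hJ, hK]; ring⟩
    exact hprime.ne_top (Ideal.isUnit_iff.1 (hsqfree 𝔭 this))
  -- 𝔭 maximal
  have h𝔭ne : 𝔭 ≠ ⊥ := fun h => hp (by simpa [h] using hp𝔭)
  have hmax : 𝔭.IsMaximal := Ideal.IsPrime.isMaximal hprime h𝔭ne
  have hsup : 𝔭 ⊔ J = ⊤ := by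
    by_contra h
    have := hmax.eq_of_le h le_sup_left
    exact hnd (Ideal.dvd_iff_le.2 (this ▸ le_sup_right))
  obtain ⟨a, ha, b, hb, hab⟩ := Submodule.mem_sup.1
    (hsup ▸ Submodule.mem_top : (1 : 𝒪) ∈ 𝔭 ⊔ J)
  have hmul : ∀ x ∈ 𝔭, x * b ∈ Ideal.span {p} := fun x hx => by
    rw [hJ]; exact Ideal.mul_mem_mul hx hb
  -- b • m is 𝔭-torsion
  have hbt : ∀ m : M, b • m ∈ Submodule.torsionBySet 𝒪 M (𝔭 : Set 𝒪) := by
    intro m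
    rw [Submodule.mem_torsionBySet_iff]
    intro ⟨x, hx⟩
    show x • b • m = 0
    rw [← mul_smul]
    exact hspan _ (hmul x hx) m
  -- b kills 𝔭 • ⊤
  have hbk : ∀ m ∈ (𝔭 • ⊤ : Submodule 𝒪 M), b • m = 0 := by
    intro m hm
    refine Submodule.smul_induction_on hm ?_ ?_
    · intro x hx n _
      rw [← mul_smul]
      exact hspan _ (by rw [mul_comm]; exact hmul x hx) n
    · intro x y hx hy; rw [smul_add, hx, hy, add_zero]
  have hdecomp : ∀ m : M, m = a • m + b • m := by
    intro m
    rw [← add_smul, hab, one_smul]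
  have hcompl : IsCompl (𝔭 • ⊤ : Submodule 𝒪 M)
      (Submodule.torsionBySet 𝒪 M (𝔭 : Set 𝒪)) := by
    constructor
    · rw [disjoint_iff]
      refine Submodule.eq_bot_iff _ |>.2 fun m hm => ?_
      obtain ⟨hm1, hm2⟩ := Submodule.mem_inf.1 hm
      have ha0 : a • m = 0 := (Submodule.mem_torsionBySet_iff _ _).1 hm2 ⟨a, ha⟩
      rw [hdecomp m, ha0, hbk m hm1, add_zero]
    · rw [codisjoint_iff]
      refine top_unique fun m _ => ?_
      rw [hdecomp m]
      exact Submodule.add_mem _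
        (Submodule.mem_sup_left (Submodule.smul_mem_smul ha Submodule.mem_top))
        (Submodule.mem_sup_right (hbt m))
  exact ⟨(TensorProduct.quotTensorEquivQuotSMul M 𝔭).trans
    (Submodule.quotientEquivOfIsCompl _ _ hcompl)⟩
end

section
/- Let $p$ be an odd prime and $M$ a finite abelian $p$-group equipped with a non-degenerate, skew-symmetric, biadditive pairing $[\cdot,\cdot]: M \times M \to \mathbb{Q}_p/\mathbb{Z}_p$ (or $\mathbb{Q}/\mathbb{Z}$). Then $M \cong M' \times M'$ for some abelian group $M'$; in particular the order of $M$ is a perfect square and $\dim_{\mathbb{F}_p} M[p]$ is even. -/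
/-!
Take `a` of maximal order `q = exp M`. Non-degeneracy of `B a` gives `b` with `[a, b]` of order
`q`, and since the `q`-torsion of `ℚ/ℤ` is cyclic, every value of the pairing is a multiple of
`[a, b]`. Subtracting suitable multiples of `a` and `b` moves any element into the common
orthogonal `K` of `a` and `b`, so `M ≅ (ℤ/q)² × K`, and the pairing is still non-degenerate and
alternating on `K`; induct on `#M`.

An odd-order skew pairing is alternating: `[x, x]` is killed by `2` and by the odd order of `x`.
-/

open AddSubgroup

universe u

theorem AddCircle.mem_zmultiples_of_addOrderOf_nsmul_eq_zero {𝕜 : Type*} [AddCommGroup 𝕜]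
    [IsAddTorsionFree 𝕜] {p : 𝕜} {c z : AddCircle p} (hc : IsOfFinAddOrder c)
    (hz : addOrderOf c • z = 0) : z ∈ zmultiples c := by
  set n := addOrderOf c
  have hreg : IsSMulRegular 𝕜 n := IsAddTorsionFree.nsmul_right_injective hc.addOrderOf_pos.ne'
  have hsub : (zmultiples c : Set (AddCircle p)) ⊆ {x | n • x = 0} := by
    rintro _ ⟨i, rfl⟩
    simp [n, smul_comm n i c]
  have hcard : (zmultiples c : Set (AddCircle p)).encard = n := by
    have : Finite (zmultiples c) := hc.finite_zmultiples
    rw [← ENat.card_coe_set_eq, ENat.card_eq_coe_natCard, SetLike.coe_sort_coe,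
      Nat.card_zmultiples]
  -- `zmultiples c` has `n` elements and lies in the `n`-torsion, which has at most `n`.
  have hle := card_torsion_le_of_isSMulRegular p n hc.addOrderOf_pos.ne' hreg
  have heq := (finite_torsion_of_isSMulRegular p n hreg).eq_of_subset_of_encard_le' hsub
    (hcard ▸ hle)
  exact SetLike.mem_coe.mp (heq ▸ hz)

theorem AddEquiv.card_subtype_nsmul_eq_zero {A B : Type*} [AddCommGroup A] [AddCommGroup B]
    (e : A ≃+ B) (n : ℕ) : Nat.card {x : A // n • x = 0} = Nat.card {y : B // n • y = 0} :=
  Nat.card_congr <| e.toEquiv.subtypeEquiv fun x => by simp [← map_nsmul]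

theorem Nat.card_subtype_nsmul_eq_zero_prod {A B : Type*} [AddCommGroup A] [AddCommGroup B]
    (n : ℕ) : Nat.card {x : A × B // n • x = 0} =
      Nat.card {a : A // n • a = 0} * Nat.card {b : B // n • b = 0} := by
  rw [← Nat.card_prod]
  exact Nat.card_congr <| (Equiv.subtypeEquivRight fun x => by simp [Prod.ext_iff]).trans
    Equiv.subtypeProdEquivProd

def zmodMultiplesHom {M : Type*} [AddCommGroup M] {n : ℕ} {x : M} (hx : n • x = 0) :
    ZMod n →+ M :=
  ZMod.lift n ⟨zmultiplesHom M x, by simpa using hx⟩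

theorem zmodMultiplesHom_intCast {M : Type*} [AddCommGroup M] {n : ℕ} {x : M} (hx : n • x = 0)
    (i : ℤ) : zmodMultiplesHom hx i = i • x :=
  ZMod.lift_coe n _ i

namespace AddMonoidHom

section Pairing

variable {M N : Type*} [AddCommGroup M] [AddCommGroup N] {B : M →+ M →+ N}

theorem apply_swap_eq_neg_of_apply_self (halt : ∀ x, B x x = 0) (x y : M) :
    B y x = -B x y := by
  have h := halt (x + y)
  simp only [map_add, AddMonoidHom.add_apply, halt, zero_add, add_zero] at h
  exact eq_neg_of_add_eq_zero_left h

theorem apply_self_eq_zero_of_odd (hskew : ∀ x y, B y x = -B x y) {x : M}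
    (hx : Odd (addOrderOf x)) : B x x = 0 := by
  have h2 : addOrderOf (B x x) ∣ 2 := addOrderOf_dvd_of_nsmul_eq_zero <| by
    rw [two_nsmul]; exact eq_neg_iff_add_eq_zero.mp (hskew x x)
  have hord : addOrderOf (B x x) ∣ addOrderOf x := addOrderOf_dvd_of_nsmul_eq_zero <| by
    rw [← nsmul_apply, ← map_nsmul, addOrderOf_nsmul_eq_zero, map_zero, zero_apply]
  exact AddMonoid.addOrderOf_eq_one_iff.mp
    ((hx.coprime_two_left.coprime_dvd_left h2).eq_one_of_dvd hord)

theorem exists_addOrderOf_apply_eq_exponent [Finite M]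
    (hnd : ∀ x, (∀ y, B x y = 0) → x = 0) :
    ∃ a b : M, addOrderOf (B a b) = AddMonoid.exponent M := by
  obtain ⟨a, ha⟩ := AddMonoid.exists_addOrderOf_eq_exponent
    (AddMonoid.ExponentExists.of_finite (G := M))
  have : Finite (B a).range := Finite.of_surjective _ (B a).rangeRestrict_surjective
  -- By non-degeneracy, `n` kills the range of `B a` iff it kills `a`.
  have hrange : AddMonoid.exponent (B a).range = addOrderOf a := by
    refine Nat.dvd_antisymm ?_ (addOrderOf_dvd_of_nsmul_eq_zero (hnd _ fun y => ?_))
    · refine AddMonoid.exponent_dvd_of_forall_nsmul_eq_zero fun ⟨_, y, rfl⟩ => Subtype.ext ?_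
      rw [AddSubgroup.coe_nsmul, ← nsmul_apply, ← map_nsmul, addOrderOf_nsmul_eq_zero, map_zero,
        zero_apply]
      rfl
    · rw [map_nsmul, nsmul_apply]
      exact congrArg Subtype.val
        (AddMonoid.exponent_nsmul_eq_zero (⟨B a y, y, rfl⟩ : (B a).range))
  obtain ⟨c, hc⟩ := AddMonoid.exists_addOrderOf_eq_exponent
    (AddMonoid.ExponentExists.of_finite (G := (B a).range))
  obtain ⟨b, hb⟩ := c.2
  exact ⟨a, b, by rw [hb, ← ha, ← hrange, ← hc, AddSubgroup.addOrderOf_coe]⟩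

end Pairing

variable {M : Type*} [AddCommGroup M] (B : M →+ M →+ AddCircle (1 : ℚ))

def orthogonalPair (a b : M) : AddSubgroup M := (B a).ker ⊓ (B b).ker

theorem mem_orthogonalPair {a b m : M} : m ∈ B.orthogonalPair a b ↔ B a m = 0 ∧ B b m = 0 :=
  Iff.rfl

noncomputable def splittingHom (a b : M) :
    (ZMod (AddMonoid.exponent M) × ZMod (AddMonoid.exponent M)) × B.orthogonalPair a b →+ M :=
  ((zmodMultiplesHom (AddMonoid.exponent_nsmul_eq_zero a)).coprod
    (zmodMultiplesHom (AddMonoid.exponent_nsmul_eq_zero b))).coprod (B.orthogonalPair a b).subtype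

variable {B} {a b : M}

theorem splittingHom_intCast (i j : ℤ) (k : B.orthogonalPair a b) :
    B.splittingHom a b ((i, j), k) = i • a + j • b + k := by
  simp [splittingHom, zmodMultiplesHom_intCast]

theorem dvd_of_zsmul_add_zsmul_add_eq_zero (halt : ∀ x, B x x = 0)
    (hab : addOrderOf (B a b) = AddMonoid.exponent M) {i j : ℤ} {k : M}
    (hk : k ∈ B.orthogonalPair a b) (h : i • a + j • b + k = 0) :
    (AddMonoid.exponent M : ℤ) ∣ i ∧ (AddMonoid.exponent M : ℤ) ∣ j := by
  rw [mem_orthogonalPair] at hk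
  have hi := congrArg (B b) h
  have hj := congrArg (B a) h
  simp only [map_add, map_zsmul, apply_swap_eq_neg_of_apply_self halt a b, smul_neg, halt,
    smul_zero, add_zero, hk, map_zero, neg_eq_zero, zero_add] at hi hj
  rw [← hab]
  exact ⟨addOrderOf_dvd_iff_zsmul_eq_zero.mpr hi, addOrderOf_dvd_iff_zsmul_eq_zero.mpr hj⟩

variable [Finite M]

theorem apply_mem_zmultiples (hab : addOrderOf (B a b) = AddMonoid.exponent M) (x y : M) :
    B x y ∈ zmultiples (B a b) := by
  refine AddCircle.mem_zmultiples_of_addOrderOf_nsmul_eq_zero ?_ ?_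
  · exact addOrderOf_pos_iff.mp (hab ▸ Nat.pos_of_ne_zero AddMonoid.exponent_ne_zero_of_finite)
  · rw [hab, ← nsmul_apply, ← map_nsmul, AddMonoid.exponent_nsmul_eq_zero, map_zero, zero_apply]

theorem exists_sub_mem_orthogonalPair (halt : ∀ x, B x x = 0)
    (hab : addOrderOf (B a b) = AddMonoid.exponent M) (m : M) :
    ∃ i j : ℤ, m - (i • a + j • b) ∈ B.orthogonalPair a b := by
  obtain ⟨j, hj⟩ := mem_zmultiples_iff.mp (apply_mem_zmultiples hab a m)
  obtain ⟨i, hi⟩ := mem_zmultiples_iff.mp (apply_mem_zmultiples hab b m)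
  refine ⟨-i, j, ?_, ?_⟩ <;>
    simp [map_sub, map_add, map_zsmul, halt, hj, hi, apply_swap_eq_neg_of_apply_self halt a b]

theorem splittingHom_bijective (halt : ∀ x, B x x = 0)
    (hab : addOrderOf (B a b) = AddMonoid.exponent M) :
    Function.Bijective (B.splittingHom a b) := by
  refine ⟨(injective_iff_map_eq_zero _).mpr ?_, fun m => ?_⟩
  · rintro ⟨⟨i, j⟩, k⟩ h
    obtain ⟨i, rfl⟩ := ZMod.intCast_surjective i
    obtain ⟨j, rfl⟩ := ZMod.intCast_surjective j
    rw [splittingHom_intCast] at h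
    obtain ⟨hi, hj⟩ := dvd_of_zsmul_add_zsmul_add_eq_zero halt hab k.2 h
    have hzsmul (x : M) {n : ℤ} (hn : (AddMonoid.exponent M : ℤ) ∣ n) : n • x = 0 :=
      addOrderOf_dvd_iff_zsmul_eq_zero.mp
        ((Int.natCast_dvd_natCast.mpr (AddMonoid.addOrder_dvd_exponent x)).trans hn)
    rw [hzsmul a hi, hzsmul b hj, zero_add, zero_add, ZeroMemClass.coe_eq_zero] at h
    simp [(ZMod.intCast_zmod_eq_zero_iff_dvd _ _).mpr, hi, hj, h]
  · obtain ⟨i, j, hk⟩ := exists_sub_mem_orthogonalPair halt hab m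
    exact ⟨((i, j), ⟨_, hk⟩), by rw [splittingHom_intCast]; exact add_sub_cancel _ _⟩

theorem card_orthogonalPair_lt [Nontrivial M] (halt : ∀ x, B x x = 0)
    (hab : addOrderOf (B a b) = AddMonoid.exponent M) :
    Nat.card (B.orthogonalPair a b) < Nat.card M := by
  rw [← Nat.card_congr (AddEquiv.ofBijective _ (splittingHom_bijective halt hab)).toEquiv,
    Nat.card_prod, Nat.card_prod, Nat.card_zmod]
  have hq := AddMonoid.one_lt_exponent (G := M)
  exact lt_mul_left Nat.card_pos (by nlinarith)

theorem eq_zero_of_mem_orthogonalPair (hnd : ∀ x, (∀ y, B x y = 0) → x = 0)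
    (halt : ∀ x, B x x = 0) (hab : addOrderOf (B a b) = AddMonoid.exponent M) {x : M}
    (hx : x ∈ B.orthogonalPair a b) (h : ∀ y ∈ B.orthogonalPair a b, B x y = 0) : x = 0 := by
  refine hnd x fun z => ?_
  obtain ⟨i, j, hk⟩ := exists_sub_mem_orthogonalPair halt hab z
  have hxa : B x a = 0 := by rw [apply_swap_eq_neg_of_apply_self halt a x, hx.1, neg_zero]
  have hxb : B x b = 0 := by rw [apply_swap_eq_neg_of_apply_self halt b x, hx.2, neg_zero]
  simpa [hxa, hxb] using h _ hk

theorem exists_addEquiv_prod_self {M : Type u} [AddCommGroup M] [Finite M]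
    (B : M →+ M →+ AddCircle (1 : ℚ)) (hnd : ∀ x, (∀ y, B x y = 0) → x = 0)
    (halt : ∀ x, B x x = 0) :
    ∃ (M' : Type u) (_ : AddCommGroup M'), Nonempty (M ≃+ M' × M') := by
  induction h : Nat.card M using Nat.strong_induction_on generalizing M with
  | _ n ih =>
  subst h
  cases subsingleton_or_nontrivial M with
  | inl _ =>
    have : Unique M := uniqueOfSubsingleton 0
    exact ⟨M, inferInstance, ⟨AddEquiv.prodUnique.symm⟩⟩
  | inr _ =>
    obtain ⟨a, b, hab⟩ := exists_addOrderOf_apply_eq_exponent hnd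
    set K := B.orthogonalPair a b
    obtain ⟨M', _, ⟨e⟩⟩ := ih _ (card_orthogonalPair_lt halt hab)
      ((B.comp K.subtype).compl₂ K.subtype)
      (fun x hx => Subtype.ext <|
        eq_zero_of_mem_orthogonalPair hnd halt hab x.2 fun y hy => hx ⟨y, hy⟩)
      (fun x => halt x) rfl
    exact ⟨ZMod (AddMonoid.exponent M) × M', inferInstance,
      ⟨(AddEquiv.ofBijective _ (splittingHom_bijective halt hab)).symm.trans
        (((AddEquiv.refl _).prodCongr e).trans (AddEquiv.prodProdProdComm _ _ _ _))⟩⟩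

end AddMonoidHom

theorem stmt_10_general (p : ℕ) (hodd : Odd p)
    (M : Type) [AddCommGroup M] [Finite M]
    (hpgp : ∀ m : M, ∃ k : ℕ, p ^ k • m = 0)
    (pair : M →+ M →+ AddCircle (1 : ℚ))
    (hnd : ∀ x : M, (∀ y : M, pair x y = 0) → x = 0)
    (hskew : ∀ x y : M, pair y x = - pair x y) :
    (∃ (M' : Type) (_ : AddCommGroup M'), Nonempty (M ≃+ M' × M')) ∧
      IsSquare (Nat.card M) ∧ IsSquare (Nat.card {m : M // p • m = 0}) := by
  have halt (x : M) : pair x x = 0 := by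
    obtain ⟨k, hk⟩ := hpgp x
    exact pair.apply_self_eq_zero_of_odd hskew
      (hodd.pow.of_dvd_nat (addOrderOf_dvd_of_nsmul_eq_zero hk))
  obtain ⟨M', _, ⟨e⟩⟩ := pair.exists_addEquiv_prod_self hnd halt
  refine ⟨⟨M', _, ⟨e⟩⟩, ⟨Nat.card M', by rw [Nat.card_congr e.toEquiv, Nat.card_prod]⟩,
    ⟨Nat.card {x : M' // p • x = 0}, ?_⟩⟩
  rw [e.card_subtype_nsmul_eq_zero, Nat.card_subtype_nsmul_eq_zero_prod]

/-- Let `p` be an odd prime and `M` a finite abelian `p`-group with a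
non-degenerate skew-symmetric biadditive pairing into `ℚ/ℤ`.  Then `M ≅ M' × M'` for
some abelian group `M'`; in particular `#M` is a perfect square, and the `𝔽_p`-dimension
of `M[p]` is even, equivalently `#M[p]` is a perfect square. -/
theorem stmt_10 (p : ℕ) [Fact p.Prime] (hodd : Odd p)
    (M : Type) [AddCommGroup M] [Finite M]
    (hpgp : ∀ m : M, ∃ k : ℕ, p ^ k • m = 0)
    (pair : M →+ M →+ AddCircle (1 : ℚ))
    (hnd : ∀ x : M, (∀ y : M, pair x y = 0) → x = 0)
    (hskew : ∀ x y : M, pair y x = - pair x y) :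
    (∃ (M' : Type) (_ : AddCommGroup M'), Nonempty (M ≃+ M' × M')) ∧
      IsSquare (Nat.card M) ∧ IsSquare (Nat.card {m : M // p • m = 0}) :=
  stmt_10_general p hodd M hpgp pair hnd hskew
end

section
/- Let $R$ be a finite product of finite fields of characteristic an odd prime $p$, with a ring involution $\dagger$, and let $H$ be a finite $R$-module equipped with a non-degenerate, skew-symmetric, $\mathbb{F}_p$-bilinear pairing $[\cdot,\cdot]': H \times H \to \mathbb{F}_p$ satisfying $[ru,w]' = [u,rw]'$ for all $r \in R$. Then each component of $\mathrm{rk}_R H$ is even, i.e. writing $R = \bigoplus_i R_i$, $\dim_{R_i}(H \otimes_R R_i)$ is even for every $i$. -/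
open TensorProduct

/-!
Choose an `R`-linear section `σ` of `R → Rᵢ` (it picks out the `i`-th idempotent component).
Then `s ⊗ u ↦ σ s • u` embeds `Rᵢ ⊗[R] H` into `H`, and the pairing pulls back to a nondegenerate
skew `Rᵢ`-balanced pairing on `Rᵢ ⊗[R] H`. Since the trace form of `Rᵢ / 𝔽_p` is nondegenerate,
such a pairing is `(x, y) ↦ tr (B x y)` for a unique `Rᵢ`-bilinear form `B`, again nondegenerate
and skew. The Gram matrix `M` of `B` has `det M = det Mᵀ = (-1)ⁿ det M ≠ 0`, so `n` is even
because `2 ≠ 0` in `Rᵢ`.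
-/

theorem LinearMap.BilinForm.even_finrank_of_skew {K V : Type*} [Field K] [AddCommGroup V]
    [Module K V] [FiniteDimensional K V] (h2 : (2 : K) ≠ 0) {B : LinearMap.BilinForm K V}
    (hB : B.Nondegenerate) (hskew : ∀ x y, B y x = -B x y) :
    Even (Module.finrank K V) := by
  by_contra hodd
  rw [Nat.not_even_iff_odd] at hodd
  let b := Module.finBasis K V
  set M := B.toMatrix b
  have hMT : M.transpose = -M := by
    ext j k
    exact hskew _ _
  have hdet : M.det = -M.det := by
    conv_lhs => rw [← Matrix.det_transpose, hMT]
    rw [Matrix.det_neg, Fintype.card_fin, hodd.neg_one_pow, neg_one_mul]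
  have hdet0 : M.det = 0 := by
    have : (2 : K) * M.det = 0 := by linear_combination hdet
    exact (mul_eq_zero.mp this).resolve_left h2
  exact (B.nondegenerate_iff_det_ne_zero b).mp hB hdet0

structure IsNondegSkewPairing (R : Type*) {V A : Type*} [SMul R V] [AddCommGroup V]
    [AddCommGroup A] (P : V →+ V →+ A) : Prop where
  nondeg : ∀ x, (∀ y, P x y = 0) → x = 0
  skew : ∀ x y, P y x = -P x y
  balanced : ∀ (r : R) x y, P (r • x) y = P x (r • y)

section TraceLift

variable {p : ℕ} [Fact p.Prime] (K : Type*) [Field K] [Finite K] [Algebra (ZMod p) K]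
  {V : Type*} [AddCommGroup V] [Module K V]

noncomputable def traceLift (P : V →+ V →+ ZMod p) (x y : V) : K :=
  ((Algebra.traceForm (ZMod p) K).toDual (traceForm_nondegenerate _ _)).symm
    (((P.flip y).comp (LinearMap.toSpanSingleton K V x).toAddMonoidHom).toZModLinearMap p)

variable {K} (P : V →+ V →+ ZMod p)

theorem trace_traceLift_mul (x y : V) (r : K) :
    Algebra.trace (ZMod p) K (traceLift K P x y * r) = P (r • x) y :=
  LinearMap.BilinForm.apply_toDual_symm_apply (hB := traceForm_nondegenerate _ _) _ r

theorem traceLift_eq_of_trace_mul {x y : V} {s : K}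
    (h : ∀ r, Algebra.trace (ZMod p) K (s * r) = P (r • x) y) : traceLift K P x y = s := by
  refine (LinearEquiv.symm_apply_eq _).mpr (LinearMap.ext fun r => ?_)
  simp [LinearMap.BilinForm.toDual_def, h]

variable {P}

theorem traceLift_add_left (x x' y : V) :
    traceLift K P (x + x') y = traceLift K P x y + traceLift K P x' y :=
  traceLift_eq_of_trace_mul P fun r => by
    rw [add_mul, map_add, trace_traceLift_mul, trace_traceLift_mul, smul_add, map_add,
      AddMonoidHom.add_apply]

theorem traceLift_smul_left (a : K) (x y : V) : traceLift K P (a • x) y = a * traceLift K P x y :=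
  traceLift_eq_of_trace_mul P fun r => by
    rw [mul_assoc, mul_comm, mul_assoc, trace_traceLift_mul, mul_smul, smul_smul]

theorem traceLift_skew (hP : IsNondegSkewPairing K P) (x y : V) :
    traceLift K P y x = -traceLift K P x y :=
  traceLift_eq_of_trace_mul P fun r => by
    rw [neg_mul, map_neg, trace_traceLift_mul, ← hP.skew, hP.balanced]

noncomputable def traceLiftBilin (hP : IsNondegSkewPairing K P) : LinearMap.BilinForm K V :=
  LinearMap.mk₂ K (traceLift K P) traceLift_add_left traceLift_smul_left
    (fun x y y' => by
      rw [traceLift_skew hP, traceLift_add_left, neg_add, ← traceLift_skew hP,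
        ← traceLift_skew hP])
    (fun a x y => by
      rw [traceLift_skew hP, traceLift_smul_left, ← mul_neg, ← traceLift_skew hP, smul_eq_mul])

theorem traceLiftBilin_nondegenerate [Module.Finite K V] (hP : IsNondegSkewPairing K P) :
    (traceLiftBilin hP).Nondegenerate :=
  .ofSeparatingLeft fun x hx => hP.nondeg x fun y => by
    have h := trace_traceLift_mul P x y (1 : K)
    rwa [mul_one, one_smul, show traceLift K P x y = 0 from hx y, map_zero, eq_comm] at h

end TraceLift

theorem IsNondegSkewPairing.even_finrank {p : ℕ} [Fact p.Prime] (hp : p ≠ 2)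
    {K : Type*} [Field K] [Finite K] [CharP K p]
    {V : Type*} [AddCommGroup V] [Module K V] [Module.Finite K V]
    {P : V →+ V →+ ZMod p} (hP : IsNondegSkewPairing K P) : Even (Module.finrank K V) := by
  let := ZMod.algebra K p
  have h2 : (2 : K) ≠ 0 := Ring.two_ne_zero (by rwa [ringChar.eq K p])
  exact LinearMap.BilinForm.even_finrank_of_skew h2 (traceLiftBilin_nondegenerate hP)
    (traceLift_skew hP)

section BaseChange

variable {R S : Type*} [CommRing R] [CommRing S] [Algebra R S] (σ : S →ₗ[R] R)
  {H : Type*} [AddCommGroup H] [Module R H]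

noncomputable def sectionProj : S ⊗[R] H →ₗ[R] H :=
  TensorProduct.lift (LinearMap.lsmul R H ∘ₗ σ)

@[simp]
theorem sectionProj_tmul (s : S) (u : H) : sectionProj σ (s ⊗ₜ u) = σ s • u :=
  TensorProduct.lift.tmul _ _

variable {σ} (hσ : ∀ s, algebraMap R S (σ s) = s)
include hσ

theorem one_tmul_sectionProj (x : S ⊗[R] H) : (1 : S) ⊗ₜ sectionProj σ x = x := by
  induction x using TensorProduct.induction_on with
  | zero => simp
  | tmul s u => rw [sectionProj_tmul, ← smul_tmul, Algebra.smul_def, mul_one, hσ]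
  | add x y hx hy => rw [map_add, tmul_add, hx, hy]

theorem sectionProj_smul (a : S) (x : S ⊗[R] H) :
    sectionProj σ (a • x) = σ a • sectionProj σ x := by
  induction x using TensorProduct.induction_on with
  | zero => simp
  | tmul s u =>
    conv_lhs => rw [← hσ a]
    rw [smul_tmul', smul_eq_mul, ← Algebra.smul_def, sectionProj_tmul, sectionProj_tmul,
      map_smul, smul_eq_mul, mul_smul]
  | add x y hx hy => rw [smul_add, map_add, map_add, hx, hy, smul_add]

theorem IsNondegSkewPairing.baseChange {A : Type*} [AddCommGroup A] {P : H →+ H →+ A}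
    (hP : IsNondegSkewPairing R P) :
    IsNondegSkewPairing S
      ((P.comp (sectionProj σ).toAddMonoidHom).compl₂ (sectionProj σ).toAddMonoidHom) where
  nondeg x hx := by
    have hproj : sectionProj σ x = 0 := hP.nondeg _ fun w => by
      have hw := hx (1 ⊗ₜ w)
      rwa [← one_smul S x, sectionProj_smul hσ, hP.balanced, ← sectionProj_tmul σ 1 w]
    rw [← one_tmul_sectionProj hσ x, hproj, tmul_zero]
  skew x y := hP.skew _ _
  balanced a x y := by
    simp only [AddMonoidHom.compl₂_apply, AddMonoidHom.comp_apply, LinearMap.toAddMonoidHom_coe,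
      sectionProj_smul hσ, hP.balanced]

end BaseChange

theorem exists_section_of_bijective_algebraMap_pi {R ι : Type*} [CommRing R] [DecidableEq ι]
    {S : ι → Type*} [∀ i, CommRing (S i)] [∀ i, Algebra R (S i)]
    (h : Function.Bijective (algebraMap R (∀ i, S i))) (i : ι) :
    ∃ σ : S i →ₗ[R] R, ∀ s, algebraMap R (S i) (σ s) = s := by
  let ψ := AlgEquiv.ofBijective (Algebra.ofId R (∀ i, S i)) h
  refine ⟨ψ.symm.toLinearMap ∘ₗ LinearMap.single R S i, fun s => ?_⟩
  calc algebraMap R (S i) (ψ.symm (Pi.single i s)) = ψ (ψ.symm (Pi.single i s)) i := rfl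
    _ = s := by rw [ψ.apply_symm_apply, Pi.single_eq_same]

theorem stmt_12_general (ι : Type*) (p : ℕ) [Fact p.Prime] (hodd : Odd p)
    (Ri : ι → Type*) [∀ i, Field (Ri i)] [∀ i, Finite (Ri i)] [∀ i, CharP (Ri i) p]
    (R : Type*) [CommRing R] [∀ i, Algebra R (Ri i)]
    (hiso : Function.Bijective fun (r : R) (i : ι) => algebraMap R (Ri i) r)
    (H : Type*) [AddCommGroup H] [Module R H] [Finite H]
    (pair : H →+ H →+ ZMod p)
    (hnd : ∀ x : H, (∀ y : H, pair x y = 0) → x = 0)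
    (hskew : ∀ x y : H, pair y x = - pair x y)
    (hbal : ∀ (r : R) (u w : H), pair (r • u) w = pair u (r • w)) :
    ∀ i, Even (Module.finrank (Ri i) (Ri i ⊗[R] H)) := by
  classical
  intro i
  obtain ⟨σ, hσ⟩ := exists_section_of_bijective_algebraMap_pi hiso i
  have : Module.Finite R H := .of_finite
  exact (IsNondegSkewPairing.baseChange hσ ⟨hnd, hskew, hbal⟩).even_finrank
    (by rintro rfl; exact Nat.not_odd_iff_even.mpr even_two hodd)

/-- Let `R ≅ ⊕ᵢ Rᵢ` be a finite product of finite fields of odd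
characteristic `p`, with ring involution `†`, and `H` a finite `R`-module with a
non-degenerate, skew-symmetric, `𝔽_p`-bilinear pairing `[·,·]'` satisfying
`[ru, w]' = [u, rw]'`.  Then every component of `rk_R H` is even:
`dim_{Rᵢ}(H ⊗_R Rᵢ)` is even for every `i`. -/
theorem stmt_12 (ι : Type*) [Fintype ι] (p : ℕ) [Fact p.Prime] (hodd : Odd p)
    (Ri : ι → Type*) [∀ i, Field (Ri i)] [∀ i, Finite (Ri i)] [∀ i, CharP (Ri i) p]
    (R : Type*) [CommRing R] [∀ i, Algebra R (Ri i)]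
    (hiso : Function.Bijective fun (r : R) (i : ι) => algebraMap R (Ri i) r)
    (dag : R ≃+* R) (hinv : ∀ r : R, dag (dag r) = r)
    (H : Type*) [AddCommGroup H] [Module R H] [Finite H]
    (pair : H →+ H →+ ZMod p)
    (hnd : ∀ x : H, (∀ y : H, pair x y = 0) → x = 0)
    (hskew : ∀ x y : H, pair y x = - pair x y)
    (hbal : ∀ (r : R) (u w : H), pair (r • u) w = pair u (r • w)) :
    ∀ i, Even (Module.finrank (Ri i) (Ri i ⊗[R] H)) :=
  stmt_12_general ι p hodd Ri R hiso H pair hnd hskew hbal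
end
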